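/- arXiv:1905.01893 — 2 statements merged into one kernel-verified Lean document; each statement's English description precedes it below -/
import Mathlib

section
/- Let {t_k} be a sequence of positive relaxation parameters converging to zero, and for each k let x_k be a KKT point of the relaxed problem P(φ_FB^{t_k}). Suppose the sequence {x_k} converges to a point x̄ ∈ X at which MPOC-MFCQ holds. Then x̄ is a W-stationary point of (MPOC). -/
noncomputable section

open Filter Topology

/-- The Fischer–Burmeister NCP-function. -/
def phiFB (v : ℝ × ℝ) : ℝ := v.1 + v.2 - Real.sqrt (v.1 ^ 2 + v.2 ^ 2)

/-- The Kanzow–Schwartz NCP-function. -/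
def phiKS (v : ℝ × ℝ) : ℝ :=
  if 0 ≤ v.1 + v.2 then v.1 * v.2 else -(v.1 ^ 2 + v.2 ^ 2) / 2

/-- The smoothed Fischer–Burmeister function. -/
def phiFBt (t : ℝ) (v : ℝ × ℝ) : ℝ :=
  v.1 + v.2 - Real.sqrt (v.1 ^ 2 + v.2 ^ 2 + 2 * t)

/-- The offset Kanzow–Schwartz function. -/
def phiKSt (t : ℝ) (v : ℝ × ℝ) : ℝ := phiKS v - t

variable {n m p q : ℕ}

/-- The feasible set `X` of (MPOC). -/
def feasMPOC (g : Fin m → (Fin n → ℝ) → ℝ) (h : Fin p → (Fin n → ℝ) → ℝ)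
    (G H : Fin q → (Fin n → ℝ) → ℝ) : Set (Fin n → ℝ) :=
  {x | (∀ i, g i x ≤ 0) ∧ (∀ j, h j x = 0) ∧ ∀ l, G l x ≤ 0 ∨ H l x ≤ 0}

/-- The feasible set `X(φ^t)` of the relaxed problem P(φ^t). -/
def relFeas (g : Fin m → (Fin n → ℝ) → ℝ) (h : Fin p → (Fin n → ℝ) → ℝ)
    (G H : Fin q → (Fin n → ℝ) → ℝ) (phit : ℝ → ℝ × ℝ → ℝ) (t : ℝ) :
    Set (Fin n → ℝ) :=
  {x | (∀ i, g i x ≤ 0) ∧ (∀ j, h j x = 0) ∧ ∀ l, phit t (G l x, H l x) ≤ 0}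

/-- The feasible set of the complementarity-constrained surrogate (CC-MPOC). -/
def feasCC (g : Fin m → (Fin n → ℝ) → ℝ) (h : Fin p → (Fin n → ℝ) → ℝ)
    (G H : Fin q → (Fin n → ℝ) → ℝ) :
    Set ((Fin n → ℝ) × (Fin q → ℝ) × (Fin q → ℝ)) :=
  {w | (∀ i, g i w.1 ≤ 0) ∧ (∀ j, h j w.1 = 0) ∧ (∀ l, G l w.1 - w.2.1 l ≤ 0) ∧
       (∀ l, H l w.1 - w.2.2 l ≤ 0) ∧ (∀ l, 0 ≤ w.2.1 l) ∧ (∀ l, 0 ≤ w.2.2 l) ∧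
       ∀ l, w.2.1 l * w.2.2 l = 0}

/-- W-stationarity for (MPOC): multipliers are supported on the respective active sets
(`I^g(x)` for `lam`, `I^{0+}(x) ∪ I^{00}(x)` for `mu`, `I^{+0}(x) ∪ I^{00}(x)` for `nu`). -/
def WStat (f : (Fin n → ℝ) → ℝ) (g : Fin m → (Fin n → ℝ) → ℝ)
    (h : Fin p → (Fin n → ℝ) → ℝ) (G H : Fin q → (Fin n → ℝ) → ℝ)
    (x : Fin n → ℝ) : Prop :=
  ∃ (lam : Fin m → ℝ) (rho : Fin p → ℝ) (mu nu : Fin q → ℝ),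
    (∀ i, 0 ≤ lam i) ∧ (∀ i, g i x ≠ 0 → lam i = 0) ∧
    (∀ l, 0 ≤ mu l) ∧ (∀ l, ¬(G l x = 0 ∧ 0 ≤ H l x) → mu l = 0) ∧
    (∀ l, 0 ≤ nu l) ∧ (∀ l, ¬(H l x = 0 ∧ 0 ≤ G l x) → nu l = 0) ∧
    fderiv ℝ f x + (∑ i, lam i • fderiv ℝ (g i) x) + (∑ j, rho j • fderiv ℝ (h j) x)
      + (∑ l, mu l • fderiv ℝ (G l) x) + (∑ l, nu l • fderiv ℝ (H l) x) = 0

/-- M-stationarity for (MPOC). -/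
def MStat (f : (Fin n → ℝ) → ℝ) (g : Fin m → (Fin n → ℝ) → ℝ)
    (h : Fin p → (Fin n → ℝ) → ℝ) (G H : Fin q → (Fin n → ℝ) → ℝ)
    (x : Fin n → ℝ) : Prop :=
  ∃ (lam : Fin m → ℝ) (rho : Fin p → ℝ) (mu nu : Fin q → ℝ),
    (∀ i, 0 ≤ lam i) ∧ (∀ i, g i x ≠ 0 → lam i = 0) ∧
    (∀ l, 0 ≤ mu l) ∧ (∀ l, ¬(G l x = 0 ∧ 0 ≤ H l x) → mu l = 0) ∧
    (∀ l, 0 ≤ nu l) ∧ (∀ l, ¬(H l x = 0 ∧ 0 ≤ G l x) → nu l = 0) ∧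
    (∀ l, G l x = 0 → H l x = 0 → mu l * nu l = 0) ∧
    fderiv ℝ f x + (∑ i, lam i • fderiv ℝ (g i) x) + (∑ j, rho j • fderiv ℝ (h j) x)
      + (∑ l, mu l • fderiv ℝ (G l) x) + (∑ l, nu l • fderiv ℝ (H l) x) = 0

/-- S-stationarity for (MPOC). -/
def SStat (f : (Fin n → ℝ) → ℝ) (g : Fin m → (Fin n → ℝ) → ℝ)
    (h : Fin p → (Fin n → ℝ) → ℝ) (G H : Fin q → (Fin n → ℝ) → ℝ)
    (x : Fin n → ℝ) : Prop :=
  ∃ (lam : Fin m → ℝ) (rho : Fin p → ℝ) (mu nu : Fin q → ℝ),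
    (∀ i, 0 ≤ lam i) ∧ (∀ i, g i x ≠ 0 → lam i = 0) ∧
    (∀ l, 0 ≤ mu l) ∧ (∀ l, ¬(G l x = 0 ∧ 0 ≤ H l x) → mu l = 0) ∧
    (∀ l, 0 ≤ nu l) ∧ (∀ l, ¬(H l x = 0 ∧ 0 ≤ G l x) → nu l = 0) ∧
    (∀ l, G l x = 0 → H l x = 0 → mu l = 0 ∧ nu l = 0) ∧
    fderiv ℝ f x + (∑ i, lam i • fderiv ℝ (g i) x) + (∑ j, rho j • fderiv ℝ (h j) x)
      + (∑ l, mu l • fderiv ℝ (G l) x) + (∑ l, nu l • fderiv ℝ (H l) x) = 0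

/-- MPOC-MFCQ at `x`: positive-linear independence of the active gradients. -/
def MPOC_MFCQ (g : Fin m → (Fin n → ℝ) → ℝ) (h : Fin p → (Fin n → ℝ) → ℝ)
    (G H : Fin q → (Fin n → ℝ) → ℝ) (x : Fin n → ℝ) : Prop :=
  ∀ (lam : Fin m → ℝ) (rho : Fin p → ℝ) (mu nu : Fin q → ℝ),
    (∀ i, 0 ≤ lam i) → (∀ i, g i x ≠ 0 → lam i = 0) →
    (∀ l, 0 ≤ mu l) → (∀ l, ¬(G l x = 0 ∧ 0 ≤ H l x) → mu l = 0) →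
    (∀ l, 0 ≤ nu l) → (∀ l, ¬(H l x = 0 ∧ 0 ≤ G l x) → nu l = 0) →
    ((∑ i, lam i • fderiv ℝ (g i) x) + (∑ j, rho j • fderiv ℝ (h j) x)
      + (∑ l, mu l • fderiv ℝ (G l) x) + (∑ l, nu l • fderiv ℝ (H l) x) = 0) →
    (∀ i, lam i = 0) ∧ (∀ j, rho j = 0) ∧ (∀ l, mu l = 0) ∧ (∀ l, nu l = 0)

/-- MPOC-LICQ at `x`: linear independence of the active gradients. -/
def MPOC_LICQ (g : Fin m → (Fin n → ℝ) → ℝ) (h : Fin p → (Fin n → ℝ) → ℝ)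
    (G H : Fin q → (Fin n → ℝ) → ℝ) (x : Fin n → ℝ) : Prop :=
  ∀ (lam : Fin m → ℝ) (rho : Fin p → ℝ) (mu nu : Fin q → ℝ),
    (∀ i, g i x ≠ 0 → lam i = 0) →
    (∀ l, ¬(G l x = 0 ∧ 0 ≤ H l x) → mu l = 0) →
    (∀ l, ¬(H l x = 0 ∧ 0 ≤ G l x) → nu l = 0) →
    ((∑ i, lam i • fderiv ℝ (g i) x) + (∑ j, rho j • fderiv ℝ (h j) x)
      + (∑ l, mu l • fderiv ℝ (G l) x) + (∑ l, nu l • fderiv ℝ (H l) x) = 0) →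
    (∀ i, lam i = 0) ∧ (∀ j, rho j = 0) ∧ (∀ l, mu l = 0) ∧ (∀ l, nu l = 0)

/-- Generic first-order (KKT-type) system for the NCP-reformulation of (MPOC): multipliers
`xi l ≥ 0` supported on the active set `𝓘(x)`, with subgradient coefficients
`(alpha l, beta l)` equal to `(1,0)` on `I^{0+}(x)`, `(0,1)` on `I^{+0}(x)`, and satisfying
`extraI00` on the biactive set `I^{00}(x)`. -/
def KKTGen (f : (Fin n → ℝ) → ℝ) (g : Fin m → (Fin n → ℝ) → ℝ)
    (h : Fin p → (Fin n → ℝ) → ℝ) (G H : Fin q → (Fin n → ℝ) → ℝ)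
    (x : Fin n → ℝ) (extraI00 : ℝ → ℝ → Prop) : Prop :=
  ∃ (lam : Fin m → ℝ) (rho : Fin p → ℝ) (xi alpha beta : Fin q → ℝ),
    (∀ i, 0 ≤ lam i) ∧ (∀ i, g i x ≠ 0 → lam i = 0) ∧
    (∀ l, 0 ≤ xi l) ∧
    (∀ l, ¬((G l x = 0 ∧ 0 ≤ H l x) ∨ (H l x = 0 ∧ 0 ≤ G l x)) → xi l = 0) ∧
    (∀ l, G l x = 0 → 0 < H l x → alpha l = 1 ∧ beta l = 0) ∧
    (∀ l, 0 < G l x → H l x = 0 → alpha l = 0 ∧ beta l = 1) ∧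
    (∀ l, G l x = 0 → H l x = 0 → extraI00 (alpha l) (beta l)) ∧
    fderiv ℝ f x + (∑ i, lam i • fderiv ℝ (g i) x) + (∑ j, rho j • fderiv ℝ (h j) x)
      + (∑ l, xi l • (alpha l • fderiv ℝ (G l) x + beta l • fderiv ℝ (H l) x)) = 0

/-- Stationarity (of W-type, refined by `extra` on the biactive set `I^{GH}`) for the
switching-constrained surrogate (SC-MPOC), after elimination of the multipliers of the
sign constraints on the slack variables. -/
def StatSC (f : (Fin n → ℝ) → ℝ) (g : Fin m → (Fin n → ℝ) → ℝ)
    (h : Fin p → (Fin n → ℝ) → ℝ) (G H : Fin q → (Fin n → ℝ) → ℝ)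
    (x : Fin n → ℝ) (y z : Fin q → ℝ) (extra : ℝ → ℝ → Prop) : Prop :=
  ∃ (lam : Fin m → ℝ) (rho : Fin p → ℝ) (muT nuT : Fin q → ℝ),
    (∀ i, 0 ≤ lam i) ∧ (∀ i, g i x ≠ 0 → lam i = 0) ∧
    (∀ l, 0 ≤ muT l) ∧ (∀ l, G l x ≠ y l → muT l = 0) ∧ (∀ l, muT l * y l = 0) ∧
    (∀ l, 0 ≤ nuT l) ∧ (∀ l, H l x ≠ z l → nuT l = 0) ∧ (∀ l, nuT l * z l = 0) ∧
    (∀ l, G l x = y l → H l x = z l → extra (muT l) (nuT l)) ∧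
    fderiv ℝ f x + (∑ i, lam i • fderiv ℝ (g i) x) + (∑ j, rho j • fderiv ℝ (h j) x)
      + (∑ l, muT l • fderiv ℝ (G l) x) + (∑ l, nuT l • fderiv ℝ (H l) x) = 0

/-- Stationarity (of W-type, refined by `extra` on the biactive set `I^{00}_CC`) for the
complementarity-constrained surrogate (CC-MPOC). -/
def StatCC (f : (Fin n → ℝ) → ℝ) (g : Fin m → (Fin n → ℝ) → ℝ)
    (h : Fin p → (Fin n → ℝ) → ℝ) (G H : Fin q → (Fin n → ℝ) → ℝ)
    (x : Fin n → ℝ) (y z : Fin q → ℝ) (extra : ℝ → ℝ → Prop) : Prop :=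
  ∃ (lam : Fin m → ℝ) (rho : Fin p → ℝ) (eta theta mubar nubar : Fin q → ℝ),
    (∀ i, 0 ≤ lam i) ∧ (∀ i, g i x ≠ 0 → lam i = 0) ∧
    (∀ l, 0 ≤ eta l) ∧ (∀ l, eta l * (G l x - y l) = 0) ∧
    (∀ l, 0 ≤ theta l) ∧ (∀ l, theta l * (H l x - z l) = 0) ∧
    (fderiv ℝ f x + (∑ i, lam i • fderiv ℝ (g i) x) + (∑ j, rho j • fderiv ℝ (h j) x)
      + (∑ l, eta l • fderiv ℝ (G l) x) + (∑ l, theta l • fderiv ℝ (H l) x) = 0) ∧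
    (∀ l, y l = 0 → eta l + mubar l = 0) ∧
    (∀ l, 0 < y l → z l = 0 → eta l = 0) ∧
    (∀ l, z l = 0 → theta l + nubar l = 0) ∧
    (∀ l, y l = 0 → 0 < z l → theta l = 0) ∧
    (∀ l, y l = 0 → z l = 0 → extra (mubar l) (nubar l))

/-!
The relaxed constraint `φ_FB^t(G, H) ≤ 0` is active only where `G, H > 0` and `G H = t`, and
there its multiplier `ξ` splits into `μ = ξ (1 - G/√⋯) = ξ H/(G+H) ≥ 0` on `∇G` and
`ν = ξ (1 - H/√⋯) = ξ G/(G+H) ≥ 0` on `∇H`, with `μ G = ν H`. After normalizing these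
multipliers together with the weight of `∇f`, a subsequence converges. The identity `μ G = ν H`
and the or-constraint at `x̄` force the limit multipliers onto the W-stationary index sets.
MPOC-MFCQ rules out a vanishing weight of `∇f` in the limit, and dividing by it gives
W-stationarity.
-/

lemma div_sqrt_le_one_of_sq_le {a r : ℝ} (h : a ^ 2 ≤ r) : a / √r ≤ 1 :=
  div_le_one_of_le₀ ((le_abs_self a).trans (Real.abs_le_sqrt h)) (Real.sqrt_nonneg r)

lemma pos_of_phiFBt_eq_zero {t a b : ℝ} (ht : 0 < t) (hphi : phiFBt t (a, b) = 0) :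
    0 < a ∧ 0 < b ∧ √(a ^ 2 + b ^ 2 + 2 * t) = a + b := by
  have hsq := Real.sq_sqrt (show 0 ≤ a ^ 2 + b ^ 2 + 2 * t by positivity)
  have hsum : √(a ^ 2 + b ^ 2 + 2 * t) = a + b := by
    unfold phiFBt at hphi
    linarith
  have hpos : 0 < a + b := hsum ▸ Real.sqrt_pos.2 (by positivity)
  rw [hsum] at hsq
  have hab : a * b = t := by nlinarith
  exact ⟨by nlinarith, by nlinarith, hsum⟩

lemma one_sub_div_add_mul_self {a b : ℝ} (hab : a + b ≠ 0) :
    (1 - a / (a + b)) * a = (1 - b / (a + b)) * b := by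
  field_simp
  ring

section Limits

variable {ι : Type*} {l : Filter ι} [l.NeBot]

lemma eq_zero_of_tendsto_of_forall_ne_zero {u v : ι → ℝ} {u₀ v₀ : ℝ}
    (hu : Tendsto u l (𝓝 u₀)) (hv : Tendsto v l (𝓝 v₀)) (hv₀ : v₀ ≠ 0)
    (huv : ∀ k, v k ≠ 0 → u k = 0) : u₀ = 0 :=
  tendsto_nhds_unique_of_eventuallyEq hu tendsto_const_nhds ((hv.eventually_ne hv₀).mono huv)

lemma eq_zero_of_tendsto_of_mul_eq {a b μ ν : ι → ℝ} {a₀ b₀ μ₀ ν₀ : ℝ}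
    (ha : Tendsto a l (𝓝 a₀)) (hb : Tendsto b l (𝓝 b₀))
    (hμ : Tendsto μ l (𝓝 μ₀)) (hν : Tendsto ν l (𝓝 ν₀)) (hμ0 : ∀ k, 0 ≤ μ k)
    (hν0 : ∀ k, 0 ≤ ν k) (hμab : ∀ k, ¬(0 < a k ∧ 0 < b k) → μ k = 0)
    (hmul : ∀ k, μ k * a k = ν k * b k) (hor : a₀ ≤ 0 ∨ b₀ ≤ 0) (hab₀ : ¬(a₀ = 0 ∧ 0 ≤ b₀)) :
    μ₀ = 0 := by
  have vanish (hev : ∀ᶠ k in l, ¬(0 < a k ∧ 0 < b k)) : μ₀ = 0 :=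
    tendsto_nhds_unique_of_eventuallyEq hμ tendsto_const_nhds (hev.mono hμab)
  rcases lt_trichotomy a₀ 0 with ha₀ | ha₀ | ha₀
  · exact vanish ((ha.eventually_lt_const ha₀).mono fun k hk hab => hk.not_gt hab.1)
  · have hb₀ : b₀ < 0 := not_le.1 fun hb₀ => hab₀ ⟨ha₀, hb₀⟩
    exact vanish ((hb.eventually_lt_const hb₀).mono fun k hk hab => hk.not_gt hab.2)
  · have hb₀ : b₀ ≤ 0 := hor.resolve_left ha₀.not_ge
    have hlim : μ₀ * a₀ = ν₀ * b₀ := tendsto_nhds_unique ((hμ.mul ha).congr hmul) (hν.mul hb)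
    have hμ₀ : 0 ≤ μ₀ := ge_of_tendsto' hμ hμ0
    have hν₀ : 0 ≤ ν₀ := ge_of_tendsto' hν hν0
    nlinarith [mul_nonpos_of_nonneg_of_nonpos hν₀ hb₀]

end Limits

lemma exists_subseq_tendsto_normalize {E : Type*} [NormedAddCommGroup E] [NormedSpace ℝ E]
    [ProperSpace E] (c : ℕ → E) :
    ∃ φ : ℕ → ℕ, StrictMono φ ∧ ∃ (sb : ℝ) (cb : E), 0 ≤ sb ∧ sb + ‖cb‖ = 1 ∧
      Tendsto (fun k => (1 + ‖c (φ k)‖)⁻¹) atTop (𝓝 sb) ∧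
      Tendsto (fun k => (1 + ‖c (φ k)‖)⁻¹ • c (φ k)) atTop (𝓝 cb) := by
  set K : Set (ℝ × E) := {w | 0 ≤ w.1 ∧ w.1 + ‖w.2‖ = 1}
  have hK : IsCompact K := by
    refine (isCompact_closedBall 0 1).of_isClosed_subset
      ((isClosed_le continuous_const continuous_fst).inter
        (isClosed_eq (by fun_prop) continuous_const)) fun w ⟨hw0, hw1⟩ => ?_
    rw [mem_closedBall_zero_iff, Prod.norm_def, Real.norm_of_nonneg hw0]
    exact max_le (by linarith [norm_nonneg w.2]) (by linarith)
  have hmem (k : ℕ) : ((1 + ‖c k‖)⁻¹, (1 + ‖c k‖)⁻¹ • c k) ∈ K := by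
    have hpos : 0 < 1 + ‖c k‖ := by positivity
    refine ⟨inv_nonneg.2 hpos.le, ?_⟩
    rw [norm_smul, Real.norm_of_nonneg (inv_nonneg.2 hpos.le)]
    field_simp
  obtain ⟨⟨sb, cb⟩, ⟨hsb, hnorm⟩, φ, hφ, hlim⟩ := hK.tendsto_subseq hmem
  exact ⟨φ, hφ, sb, cb, hsb, hnorm, hlim.fst_nhds, hlim.snd_nhds⟩

def IsSmoothedFBKKT (f : (Fin n → ℝ) → ℝ) (g : Fin m → (Fin n → ℝ) → ℝ)
    (h : Fin p → (Fin n → ℝ) → ℝ) (G H : Fin q → (Fin n → ℝ) → ℝ) (t : ℝ)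
    (y : Fin n → ℝ) : Prop :=
  ∃ (lam : Fin m → ℝ) (rho : Fin p → ℝ) (xi : Fin q → ℝ),
    (∀ i, 0 ≤ lam i) ∧ (∀ i, g i y ≠ 0 → lam i = 0) ∧
    (∀ l, 0 ≤ xi l) ∧ (∀ l, phiFBt t (G l y, H l y) ≠ 0 → xi l = 0) ∧
    fderiv ℝ f y + (∑ i, lam i • fderiv ℝ (g i) y) + (∑ j, rho j • fderiv ℝ (h j) y)
      + (∑ l, xi l •
        ((1 - G l y / √(G l y ^ 2 + H l y ^ 2 + 2 * t)) • fderiv ℝ (G l) y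
          + (1 - H l y / √(G l y ^ 2 + H l y ^ 2 + 2 * t)) • fderiv ℝ (H l) y)) = 0

/-- Multipliers `(λ, ρ, μ, ν)` of the constraints `g`, `h`, `G` and `H`. -/
abbrev Multipliers (m p q : ℕ) : Type :=
  (Fin m → ℝ) × (Fin p → ℝ) × (Fin q → ℝ) × (Fin q → ℝ)

section Multipliers

variable (g : Fin m → (Fin n → ℝ) → ℝ) (h : Fin p → (Fin n → ℝ) → ℝ)
  (G H : Fin q → (Fin n → ℝ) → ℝ)

def gradCombo (x : Fin n → ℝ) (c : Multipliers m p q) : (Fin n → ℝ) →L[ℝ] ℝ :=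
  (∑ i, c.1 i • fderiv ℝ (g i) x) + (∑ j, c.2.1 j • fderiv ℝ (h j) x)
    + (∑ l, c.2.2.1 l • fderiv ℝ (G l) x) + (∑ l, c.2.2.2 l • fderiv ℝ (H l) x)

structure IsWMultiplier (x : Fin n → ℝ) (c : Multipliers m p q) : Prop where
  lam_nonneg : ∀ i, 0 ≤ c.1 i
  lam_eq_zero : ∀ i, g i x ≠ 0 → c.1 i = 0
  mu_nonneg : ∀ l, 0 ≤ c.2.2.1 l
  mu_eq_zero : ∀ l, ¬(G l x = 0 ∧ 0 ≤ H l x) → c.2.2.1 l = 0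
  nu_nonneg : ∀ l, 0 ≤ c.2.2.2 l
  nu_eq_zero : ∀ l, ¬(H l x = 0 ∧ 0 ≤ G l x) → c.2.2.2 l = 0

/-- Multipliers of a relaxation whose or-constraints are active only where `G, H > 0`, with the
multiplier of each of them split along `∇G` and `∇H`. -/
structure IsRelaxedMultiplier (x : Fin n → ℝ) (c : Multipliers m p q) : Prop where
  lam_nonneg : ∀ i, 0 ≤ c.1 i
  lam_eq_zero : ∀ i, g i x ≠ 0 → c.1 i = 0
  mu_nonneg : ∀ l, 0 ≤ c.2.2.1 l
  mu_eq_zero : ∀ l, ¬(0 < G l x ∧ 0 < H l x) → c.2.2.1 l = 0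
  nu_nonneg : ∀ l, 0 ≤ c.2.2.2 l
  nu_eq_zero : ∀ l, ¬(0 < H l x ∧ 0 < G l x) → c.2.2.2 l = 0
  mu_mul_eq_nu_mul : ∀ l, c.2.2.1 l * G l x = c.2.2.2 l * H l x

variable {g h G H}

lemma gradCombo_smul (x : Fin n → ℝ) (s : ℝ) (c : Multipliers m p q) :
    gradCombo g h G H x (s • c) = s • gradCombo g h G H x c := by
  simp only [gradCombo, Prod.smul_fst, Prod.smul_snd, Pi.smul_apply, smul_eq_mul, smul_add,
    Finset.smul_sum, smul_smul]

lemma continuous_gradCombo (hg : ∀ i, Continuous (fderiv ℝ (g i)))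
    (hh : ∀ j, Continuous (fderiv ℝ (h j))) (hG : ∀ l, Continuous (fderiv ℝ (G l)))
    (hH : ∀ l, Continuous (fderiv ℝ (H l))) :
    Continuous fun w : (Fin n → ℝ) × Multipliers m p q => gradCombo g h G H w.1 w.2 := by
  unfold gradCombo
  fun_prop

lemma IsWMultiplier.smul {x : Fin n → ℝ} {c : Multipliers m p q}
    (hc : IsWMultiplier g G H x c) {s : ℝ} (hs : 0 ≤ s) : IsWMultiplier g G H x (s • c) where
  lam_nonneg i := mul_nonneg hs (hc.lam_nonneg i)
  lam_eq_zero i hi := by simp [hc.lam_eq_zero i hi]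
  mu_nonneg l := mul_nonneg hs (hc.mu_nonneg l)
  mu_eq_zero l hl := by simp [hc.mu_eq_zero l hl]
  nu_nonneg l := mul_nonneg hs (hc.nu_nonneg l)
  nu_eq_zero l hl := by simp [hc.nu_eq_zero l hl]

lemma IsRelaxedMultiplier.smul {x : Fin n → ℝ} {c : Multipliers m p q}
    (hc : IsRelaxedMultiplier g G H x c) {s : ℝ} (hs : 0 ≤ s) :
    IsRelaxedMultiplier g G H x (s • c) where
  lam_nonneg i := mul_nonneg hs (hc.lam_nonneg i)
  lam_eq_zero i hi := by simp [hc.lam_eq_zero i hi]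
  mu_nonneg l := mul_nonneg hs (hc.mu_nonneg l)
  mu_eq_zero l hl := by simp [hc.mu_eq_zero l hl]
  nu_nonneg l := mul_nonneg hs (hc.nu_nonneg l)
  nu_eq_zero l hl := by simp [hc.nu_eq_zero l hl]
  mu_mul_eq_nu_mul l := by
    simp only [Prod.smul_snd, Prod.smul_fst, Pi.smul_apply, smul_eq_mul, mul_assoc,
      hc.mu_mul_eq_nu_mul l]

lemma IsWMultiplier.of_tendsto {x : ℕ → Fin n → ℝ} {c : ℕ → Multipliers m p q}
    {xb : Fin n → ℝ} {cb : Multipliers m p q} (hg : ∀ i, Continuous (g i))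
    (hG : ∀ l, Continuous (G l)) (hH : ∀ l, Continuous (H l))
    (hx : Tendsto x atTop (𝓝 xb)) (hc : Tendsto c atTop (𝓝 cb))
    (hrel : ∀ k, IsRelaxedMultiplier g G H (x k) (c k))
    (hor : ∀ l, G l xb ≤ 0 ∨ H l xb ≤ 0) : IsWMultiplier g G H xb cb := by
  have hlam i := hc.fst_nhds.apply_nhds i
  have hmu l := hc.snd_nhds.snd_nhds.fst_nhds.apply_nhds l
  have hnu l := hc.snd_nhds.snd_nhds.snd_nhds.apply_nhds l
  have hGx l := ((hG l).tendsto xb).comp hx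
  have hHx l := ((hH l).tendsto xb).comp hx
  exact
    { lam_nonneg i := ge_of_tendsto' (hlam i) fun k => (hrel k).lam_nonneg i
      lam_eq_zero i hi := eq_zero_of_tendsto_of_forall_ne_zero (hlam i)
        (((hg i).tendsto xb).comp hx) hi fun k => (hrel k).lam_eq_zero i
      mu_nonneg l := ge_of_tendsto' (hmu l) fun k => (hrel k).mu_nonneg l
      mu_eq_zero l hl := eq_zero_of_tendsto_of_mul_eq (hGx l) (hHx l) (hmu l) (hnu l)
        (fun k => (hrel k).mu_nonneg l) (fun k => (hrel k).nu_nonneg l)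
        (fun k => (hrel k).mu_eq_zero l) (fun k => (hrel k).mu_mul_eq_nu_mul l) (hor l) hl
      nu_nonneg l := ge_of_tendsto' (hnu l) fun k => (hrel k).nu_nonneg l
      nu_eq_zero l hl := eq_zero_of_tendsto_of_mul_eq (hHx l) (hGx l) (hnu l) (hmu l)
        (fun k => (hrel k).nu_nonneg l) (fun k => (hrel k).mu_nonneg l)
        (fun k => (hrel k).nu_eq_zero l) (fun k => ((hrel k).mu_mul_eq_nu_mul l).symm)
        (hor l).symm hl }

lemma wStat_of_isWMultiplier {f : (Fin n → ℝ) → ℝ} {x : Fin n → ℝ} {c : Multipliers m p q}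
    (hc : IsWMultiplier g G H x c) (hstat : fderiv ℝ f x + gradCombo g h G H x c = 0) :
    WStat f g h G H x :=
  ⟨c.1, c.2.1, c.2.2.1, c.2.2.2, hc.lam_nonneg, hc.lam_eq_zero, hc.mu_nonneg, hc.mu_eq_zero,
    hc.nu_nonneg, hc.nu_eq_zero, by simpa only [gradCombo, ← add_assoc] using hstat⟩

lemma MPOC_MFCQ.eq_zero {x : Fin n → ℝ} (hmfcq : MPOC_MFCQ g h G H x)
    {c : Multipliers m p q} (hc : IsWMultiplier g G H x c) (hzero : gradCombo g h G H x c = 0) :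
    c = 0 := by
  obtain ⟨hlam, hrho, hmu, hnu⟩ := hmfcq c.1 c.2.1 c.2.2.1 c.2.2.2 hc.lam_nonneg hc.lam_eq_zero
    hc.mu_nonneg hc.mu_eq_zero hc.nu_nonneg hc.nu_eq_zero hzero
  exact Prod.ext (funext hlam) (Prod.ext (funext hrho) (Prod.ext (funext hmu) (funext hnu)))

end Multipliers

section Convergence

variable {f : (Fin n → ℝ) → ℝ} {g : Fin m → (Fin n → ℝ) → ℝ} {h : Fin p → (Fin n → ℝ) → ℝ}
  {G H : Fin q → (Fin n → ℝ) → ℝ}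

lemma IsSmoothedFBKKT.exists_isRelaxedMultiplier {t : ℝ} (ht : 0 < t) {y : Fin n → ℝ}
    (hkkt : IsSmoothedFBKKT f g h G H t y) :
    ∃ c : Multipliers m p q,
      IsRelaxedMultiplier g G H y c ∧ fderiv ℝ f y + gradCombo g h G H y c = 0 := by
  obtain ⟨lam, rho, xi, hlam0, hlam, hxi0, hxi, hstat⟩ := hkkt
  have hactive (l) (hl : xi l ≠ 0) :
      0 < G l y ∧ 0 < H l y ∧ √(G l y ^ 2 + H l y ^ 2 + 2 * t) = G l y + H l y :=
    pos_of_phiFBt_eq_zero ht (not_imp_comm.1 (hxi l) hl)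
  have hxi_eq_zero (l) (hl : ¬(0 < G l y ∧ 0 < H l y)) : xi l = 0 :=
    by_contra fun hne => hl ⟨(hactive l hne).1, (hactive l hne).2.1⟩
  refine ⟨(lam, rho, fun l => xi l * (1 - G l y / √(G l y ^ 2 + H l y ^ 2 + 2 * t)),
    fun l => xi l * (1 - H l y / √(G l y ^ 2 + H l y ^ 2 + 2 * t))),
    ⟨hlam0, hlam, fun l => ?_, fun l hl => ?_, fun l => ?_, fun l hl => ?_, fun l => ?_⟩, ?_⟩
  · exact mul_nonneg (hxi0 l)
      (sub_nonneg.2 (div_sqrt_le_one_of_sq_le (by nlinarith [sq_nonneg (H l y)])))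
  · simp [hxi_eq_zero l hl]
  · exact mul_nonneg (hxi0 l)
      (sub_nonneg.2 (div_sqrt_le_one_of_sq_le (by nlinarith [sq_nonneg (G l y)])))
  · simp [hxi_eq_zero l (hl ∘ And.symm)]
  · by_cases hl : xi l = 0
    · simp [hl]
    obtain ⟨hGpos, hHpos, hsqrt⟩ := hactive l hl
    simp only [hsqrt, mul_assoc, one_sub_div_add_mul_self (by positivity : G l y + H l y ≠ 0)]
  · simpa only [gradCombo, smul_add, Finset.sum_add_distrib, smul_smul, ← add_assoc] using hstat

theorem wStat_of_tendsto_of_isRelaxedMultiplier (hf : ContDiff ℝ 1 f)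
    (hg : ∀ i, ContDiff ℝ 1 (g i)) (hh : ∀ j, ContDiff ℝ 1 (h j))
    (hG : ∀ l, ContDiff ℝ 1 (G l)) (hH : ∀ l, ContDiff ℝ 1 (H l))
    {x : ℕ → Fin n → ℝ} {xb : Fin n → ℝ} (hx : Tendsto x atTop (𝓝 xb))
    (hkkt : ∀ k, ∃ c : Multipliers m p q,
      IsRelaxedMultiplier g G H (x k) c ∧ fderiv ℝ f (x k) + gradCombo g h G H (x k) c = 0)
    (hor : ∀ l, G l xb ≤ 0 ∨ H l xb ≤ 0) (hmfcq : MPOC_MFCQ g h G H xb) :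
    WStat f g h G H xb := by
  choose c hrel hstat using hkkt
  obtain ⟨φ, hφ, sb, cb, hsb, hnorm, hs, hcb⟩ := exists_subseq_tendsto_normalize c
  have hxφ : Tendsto (x ∘ φ) atTop (𝓝 xb) := hx.comp hφ.tendsto_atTop
  have hW : IsWMultiplier g G H xb cb :=
    .of_tendsto (fun i => (hg i).continuous) (fun l => (hG l).continuous)
      (fun l => (hH l).continuous) hxφ hcb (fun k => (hrel (φ k)).smul (by positivity)) hor
  have hlim : sb • fderiv ℝ f xb + gradCombo g h G H xb cb = 0 := by
    have hcombo := continuous_gradCombo (fun i => (hg i).continuous_fderiv one_ne_zero)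
      (fun j => (hh j).continuous_fderiv one_ne_zero)
      (fun l => (hG l).continuous_fderiv one_ne_zero)
      (fun l => (hH l).continuous_fderiv one_ne_zero)
    have hf' := hf.continuous_fderiv one_ne_zero
    have hcont : Continuous fun w : ℝ × (Fin n → ℝ) × Multipliers m p q =>
        w.1 • fderiv ℝ f w.2.1 + gradCombo g h G H w.2.1 w.2.2 := by
      fun_prop
    refine tendsto_nhds_unique ((hcont.tendsto (sb, xb, cb)).comp
      (hs.prodMk_nhds (hxφ.prodMk_nhds hcb))) (tendsto_const_nhds.congr fun k => ?_)
    simp [gradCombo_smul, ← smul_add, hstat]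
  rcases hsb.eq_or_lt with rfl | hpos
  · have hcb0 := hmfcq.eq_zero hW (by simpa using hlim)
    simp [hcb0] at hnorm
  · refine wStat_of_isWMultiplier (hW.smul (inv_nonneg.2 hpos.le)) ?_
    rw [gradCombo_smul, ← inv_smul_smul₀ hpos.ne' (fderiv ℝ f xb), ← smul_add, hlim, smul_zero]

end Convergence

theorem convergence_smoothedFB_general {n m p q : ℕ} (f : (Fin n → ℝ) → ℝ)
    (g : Fin m → (Fin n → ℝ) → ℝ) (h : Fin p → (Fin n → ℝ) → ℝ)
    (G H : Fin q → (Fin n → ℝ) → ℝ)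
    (hf : ContDiff ℝ 1 f) (hg : ∀ i, ContDiff ℝ 1 (g i)) (hh : ∀ j, ContDiff ℝ 1 (h j))
    (hG : ∀ l, ContDiff ℝ 1 (G l)) (hH : ∀ l, ContDiff ℝ 1 (H l))
    (t : ℕ → ℝ) (ht : ∀ k, 0 < t k)
    (x : ℕ → Fin n → ℝ)
    (hkkt : ∀ k, x k ∈ relFeas g h G H phiFBt (t k) ∧
      ∃ (lam : Fin m → ℝ) (rho : Fin p → ℝ) (xi : Fin q → ℝ),
        (∀ i, 0 ≤ lam i) ∧ (∀ i, g i (x k) ≠ 0 → lam i = 0) ∧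
        (∀ l, 0 ≤ xi l) ∧ (∀ l, phiFBt (t k) (G l (x k), H l (x k)) ≠ 0 → xi l = 0) ∧
        fderiv ℝ f (x k) + (∑ i, lam i • fderiv ℝ (g i) (x k))
          + (∑ j, rho j • fderiv ℝ (h j) (x k))
          + (∑ l, xi l •
            ((1 - G l (x k) / Real.sqrt ((G l (x k)) ^ 2 + (H l (x k)) ^ 2 + 2 * t k)) •
                fderiv ℝ (G l) (x k)
              + (1 - H l (x k) / Real.sqrt ((G l (x k)) ^ 2 + (H l (x k)) ^ 2 + 2 * t k)) •
                fderiv ℝ (H l) (x k))) = 0)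
    (xb : Fin n → ℝ) (hconv : Filter.Tendsto x Filter.atTop (nhds xb))
    (hxb : xb ∈ feasMPOC g h G H) (hmfcq : MPOC_MFCQ g h G H xb) :
    WStat f g h G H xb :=
  wStat_of_tendsto_of_isRelaxedMultiplier hf hg hh hG hH hconv
    (fun k => IsSmoothedFBKKT.exists_isRelaxedMultiplier (ht k) (hkkt k).2) hxb.2.2 hmfcq

/-- Convergence of the Scholtes-type relaxation scheme based on the smoothed
Fischer–Burmeister function: limits of KKT points of P(φ_FB^{t_k}) are W-stationary for
(MPOC) under MPOC-MFCQ. -/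
theorem convergence_smoothedFB {n m p q : ℕ} (f : (Fin n → ℝ) → ℝ)
    (g : Fin m → (Fin n → ℝ) → ℝ) (h : Fin p → (Fin n → ℝ) → ℝ)
    (G H : Fin q → (Fin n → ℝ) → ℝ)
    (hf : ContDiff ℝ 1 f) (hg : ∀ i, ContDiff ℝ 1 (g i)) (hh : ∀ j, ContDiff ℝ 1 (h j))
    (hG : ∀ l, ContDiff ℝ 1 (G l)) (hH : ∀ l, ContDiff ℝ 1 (H l))
    (t : ℕ → ℝ) (ht : ∀ k, 0 < t k) (htlim : Filter.Tendsto t Filter.atTop (nhds 0))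
    (x : ℕ → Fin n → ℝ)
    (hkkt : ∀ k, x k ∈ relFeas g h G H phiFBt (t k) ∧
      ∃ (lam : Fin m → ℝ) (rho : Fin p → ℝ) (xi : Fin q → ℝ),
        (∀ i, 0 ≤ lam i) ∧ (∀ i, g i (x k) ≠ 0 → lam i = 0) ∧
        (∀ l, 0 ≤ xi l) ∧ (∀ l, phiFBt (t k) (G l (x k), H l (x k)) ≠ 0 → xi l = 0) ∧
        fderiv ℝ f (x k) + (∑ i, lam i • fderiv ℝ (g i) (x k))
          + (∑ j, rho j • fderiv ℝ (h j) (x k))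
          + (∑ l, xi l •
            ((1 - G l (x k) / Real.sqrt ((G l (x k)) ^ 2 + (H l (x k)) ^ 2 + 2 * t k)) •
                fderiv ℝ (G l) (x k)
              + (1 - H l (x k) / Real.sqrt ((G l (x k)) ^ 2 + (H l (x k)) ^ 2 + 2 * t k)) •
                fderiv ℝ (H l) (x k))) = 0)
    (xb : Fin n → ℝ) (hconv : Filter.Tendsto x Filter.atTop (nhds xb))
    (hxb : xb ∈ feasMPOC g h G H) (hmfcq : MPOC_MFCQ g h G H xb) :
    WStat f g h G H xb :=
  convergence_smoothedFB_general f g h G H hf hg hh hG hH t ht x hkkt xb hconv hxb hmfcq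
end
end

section
/- Let x̄ ∈ X be a feasible point of (MPOC) at which MPOC-MFCQ holds. Then there exists a neighborhood U ⊆ ℝⁿ of x̄ such that for every t > 0 and every x ∈ X(φ_KS^t) ∩ U, MFCQ holds for P(φ_KS^t) at x, i.e., the only coefficients λ_i ≥ 0 (i ∈ I^g(x)), ξ_l ≥ 0 (l ∈ I^{φ_KS^t}(x)), ρ_j ∈ ℝ (j ∈ P) with 0 = Σ λ_i ∇g_i(x) + Σ ρ_j ∇h_j(x) + Σ_{l ∈ I^{φ_KS^t}(x)} ξ_l (H_l(x) ∇G_l(x) + G_l(x) ∇H_l(x)) are all zero. -/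
/-!
Positive linear independence of finitely many vectors, with coefficients restricted to a closed
cone, is an open condition: on the compact set of unit coefficient vectors in the cone the
combination stays away from zero under small perturbations of the vectors. So MPOC-MFCQ at `x̄`
persists for any vectors close enough to the gradients at `x̄`.

Near `x̄`, an active constraint `G_l H_l = t` of P(φ_KS^t) has `G_l(x), H_l(x) > 0`, hence
`l ∈ I^{0+}(x̄) ∪ I^{00}(x̄) ∪ I^{+0}(x̄)`. On `I^{00}` the term `ξ (H ∇G + G ∇H)` is an admissible
MPOC combination with multipliers `ξH, ξG`; on `I^{0+}` it equals `(ξH) (∇G + (G/H) ∇H)`, and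
`∇G + (G/H) ∇H → ∇G(x̄)` because `G/H → 0`, uniformly in `t` (symmetrically on `I^{+0}`). A
vanishing combination for P(φ_KS^t) thus becomes one for perturbed MPOC gradients, whose
multipliers must vanish.
-/

noncomputable section

open Filter Topology

variable {n m p q : ℕ}

theorem eventually_forall_sum_smul_eq_zero_imp {X ι E : Type*} [TopologicalSpace X] [Fintype ι]
    [NormedAddCommGroup E] [NormedSpace ℝ E] {C : Set (ι → ℝ)} (hC : IsClosed C)
    (hC_smul : ∀ r : ℝ, 0 < r → ∀ c ∈ C, r • c ∈ C) {v : X → ι → E} {x₀ : X} {v₀ : ι → E}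
    (hv : ∀ i, Tendsto (fun x => v x i) (𝓝 x₀) (𝓝 (v₀ i)))
    (h₀ : ∀ c ∈ C, ∑ i, c i • v₀ i = 0 → c = 0) :
    ∀ᶠ x in 𝓝 x₀, ∀ c ∈ C, ∑ i, c i • v x i = 0 → c = 0 := by
  have hK : IsCompact (C ∩ Metric.sphere 0 1) := (isCompact_sphere 0 1).inter_left hC
  have hsphere : ∀ᶠ x in 𝓝 x₀, ∀ c ∈ C ∩ Metric.sphere 0 1, ∑ i, c i • v x i ≠ 0 := by
    refine hK.eventually_forall_of_forall_eventually fun c ⟨hcC, hc1⟩ => ?_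
    have hne : ∑ i, c i • v₀ i ≠ 0 := fun h0 => by
      simp [h₀ c hcC h0] at hc1
    have hlim : Tendsto (fun z : X × (ι → ℝ) => ∑ i, z.2 i • v z.1 i) (𝓝 (x₀, c))
        (𝓝 (∑ i, c i • v₀ i)) := by
      rw [nhds_prod_eq]
      refine tendsto_finsetSum _ fun i _ => ?_
      exact (((continuous_apply i).tendsto c).comp tendsto_snd).smul ((hv i).comp tendsto_fst)
    exact hlim.eventually_ne hne
  filter_upwards [hsphere] with x hx c hc hsum
  by_contra hc0
  have hpos : 0 < ‖c‖ := norm_pos_iff.2 hc0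
  refine hx (‖c‖⁻¹ • c) ⟨hC_smul _ (inv_pos.2 hpos) c hc, by simp [norm_smul, hpos.ne']⟩ ?_
  simp only [Pi.smul_apply, smul_eq_mul, mul_smul, ← Finset.smul_sum, hsum, smul_zero]

theorem ContinuousAt.eventually_imp_lt {X : Type*} [TopologicalSpace X] {f : X → ℝ} {x₀ : X}
    (hf : ContinuousAt f x₀) (c : ℝ) : ∀ᶠ x in 𝓝 x₀, f x₀ < c → f x < c := by
  by_cases h : f x₀ < c
  · filter_upwards [hf.eventually_lt continuousAt_const h] with x hx using fun _ => hx
  · exact Eventually.of_forall fun _ h' => absurd h' h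

theorem pos_and_pos_of_phiKSt_eq_zero {t a b : ℝ} (ht : 0 < t) (h : phiKSt t (a, b) = 0) :
    0 < a ∧ 0 < b := by
  simp only [phiKSt, phiKS] at h
  split_ifs at h with hab
  · constructor <;> nlinarith
  · nlinarith [sq_nonneg a, sq_nonneg b]

theorem pattern_of_phiKSt_eq_zero {t a b a₀ b₀ : ℝ} (ht : 0 < t) (h : phiKSt t (a, b) = 0)
    (ha : a₀ < 0 → a < 0) (hb : b₀ < 0 → b < 0) (hfeas : a₀ ≤ 0 ∨ b₀ ≤ 0) :
    (0 < a ∧ 0 < b) ∧ ((a₀ = 0 ∧ 0 ≤ b₀) ∨ (b₀ = 0 ∧ 0 ≤ a₀)) := by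
  obtain ⟨hapos, hbpos⟩ := pos_and_pos_of_phiKSt_eq_zero ht h
  have ha₀ : 0 ≤ a₀ := not_lt.1 fun hneg => (ha hneg).not_gt hapos
  have hb₀ : 0 ≤ b₀ := not_lt.1 fun hneg => (hb hneg).not_gt hbpos
  refine ⟨⟨hapos, hbpos⟩, ?_⟩
  rcases hfeas with ha' | hb'
  exacts [.inl ⟨le_antisymm ha' ha₀, hb₀⟩, .inr ⟨le_antisymm hb' hb₀, ha₀⟩]

def transportedMult {α : Type*} (u w : α → ℝ) (xb x : α) (ξ : ℝ) : ℝ :=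
  if u xb = 0 ∧ 0 ≤ w xb then ξ * w x else 0

theorem transportedMult_nonneg {α : Type*} {u w : α → ℝ} {xb x : α} {ξ : ℝ} (hξ : 0 ≤ ξ)
    (hw : ξ ≠ 0 → 0 < w x) : 0 ≤ transportedMult u w xb x ξ := by
  unfold transportedMult
  split_ifs
  · rcases eq_or_ne ξ 0 with h0 | hne
    exacts [h0 ▸ (zero_mul (w x)).ge, mul_nonneg hξ (hw hne).le]
  · exact le_rfl

theorem eq_zero_of_transportedMult_eq_zero {α : Type*} {u w : α → ℝ} {xb x : α} {ξ : ℝ}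
    (hu : u x ≠ 0) (hw : w x ≠ 0) (hxb : (u xb = 0 ∧ 0 ≤ w xb) ∨ (w xb = 0 ∧ 0 ≤ u xb))
    (h₁ : transportedMult u w xb x ξ = 0) (h₂ : transportedMult w u xb x ξ = 0) : ξ = 0 := by
  rcases hxb with hxb | hxb
  · simpa [transportedMult, hxb, hw] using h₁
  · simpa [transportedMult, hxb, hu] using h₂

section Transport

variable {E : Type*} [NormedAddCommGroup E] [NormedSpace ℝ E]

def transportedGrad (u w : E → ℝ) (xb x : E) : E →L[ℝ] ℝ :=
  if u xb = 0 ∧ 0 < w xb then fderiv ℝ u x + (u x / w x) • fderiv ℝ w x else fderiv ℝ u x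

theorem tendsto_transportedGrad {u w : E → ℝ} (hu : ContDiff ℝ 1 u) (hw : ContDiff ℝ 1 w)
    (xb : E) : Tendsto (transportedGrad u w xb) (𝓝 xb) (𝓝 (fderiv ℝ u xb)) := by
  unfold transportedGrad
  have hdu := (hu.continuous_fderiv one_ne_zero).tendsto xb
  by_cases hxb : u xb = 0 ∧ 0 < w xb
  · have hdw := (hw.continuous_fderiv one_ne_zero).tendsto xb
    have := hdu.add (((hu.continuous.tendsto xb).div (hw.continuous.tendsto xb) hxb.2.ne').smul hdw)
    simpa [hxb] using this
  · simpa [hxb] using hdu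

theorem transportedMult_smul_add_of_left {u w : E → ℝ} {xb x : E} (ξ : ℝ) (hw : w x ≠ 0)
    (hxb : u xb = 0 ∧ 0 ≤ w xb) :
    transportedMult u w xb x ξ • transportedGrad u w xb x
      + transportedMult w u xb x ξ • transportedGrad w u xb x
      = ξ • (w x • fderiv ℝ u x + u x • fderiv ℝ w x) := by
  obtain ⟨hu₀, hw₀⟩ := hxb
  rcases hw₀.eq_or_lt with hw₀ | hw₀
  · simp [transportedMult, transportedGrad, hu₀, ← hw₀, smul_smul]
  · simp only [transportedMult, transportedGrad, hu₀, hw₀, hw₀.le, hw₀.ne', and_true,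
      false_and, if_true, if_false, smul_add, smul_smul, zero_smul, add_zero]
    congr 2
    field_simp

theorem transportedMult_smul_add {u w : E → ℝ} {xb x : E} (ξ : ℝ) (hu : u x ≠ 0) (hw : w x ≠ 0)
    (hxb : (u xb = 0 ∧ 0 ≤ w xb) ∨ (w xb = 0 ∧ 0 ≤ u xb)) :
    transportedMult u w xb x ξ • transportedGrad u w xb x
      + transportedMult w u xb x ξ • transportedGrad w u xb x
      = ξ • (w x • fderiv ℝ u x + u x • fderiv ℝ w x) := by
  rcases hxb with hxb | hxb
  · exact transportedMult_smul_add_of_left ξ hw hxb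
  · rw [add_comm, transportedMult_smul_add_of_left ξ hu hxb, add_comm]

end Transport

def MPOCAdmissible (g : Fin m → (Fin n → ℝ) → ℝ) (G H : Fin q → (Fin n → ℝ) → ℝ)
    (x : Fin n → ℝ) (lam : Fin m → ℝ) (mu nu : Fin q → ℝ) : Prop :=
  (∀ i, 0 ≤ lam i) ∧ (∀ i, g i x ≠ 0 → lam i = 0) ∧
    (∀ l, 0 ≤ mu l) ∧ (∀ l, ¬(G l x = 0 ∧ 0 ≤ H l x) → mu l = 0) ∧
    (∀ l, 0 ≤ nu l) ∧ (∀ l, ¬(H l x = 0 ∧ 0 ≤ G l x) → nu l = 0)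

theorem MPOCAdmissible.smul {g : Fin m → (Fin n → ℝ) → ℝ} {G H : Fin q → (Fin n → ℝ) → ℝ}
    {x : Fin n → ℝ} {lam : Fin m → ℝ} {mu nu : Fin q → ℝ} (hadm : MPOCAdmissible g G H x lam mu nu)
    {r : ℝ} (hr : 0 ≤ r) : MPOCAdmissible g G H x (r • lam) (r • mu) (r • nu) := by
  obtain ⟨h₁, h₂, h₃, h₄, h₅, h₆⟩ := hadm
  refine ⟨fun i => mul_nonneg hr (h₁ i), fun i hi => ?_, fun l => mul_nonneg hr (h₃ l),
    fun l hl => ?_, fun l => mul_nonneg hr (h₅ l), fun l hl => ?_⟩ <;>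
    simp [*]

theorem isClosed_setOf_MPOCAdmissible {ι : Type*} (g : Fin m → (Fin n → ℝ) → ℝ)
    (G H : Fin q → (Fin n → ℝ) → ℝ) (x : Fin n → ℝ) {lam : (ι → ℝ) → Fin m → ℝ}
    {mu nu : (ι → ℝ) → Fin q → ℝ} (hlam : Continuous lam) (hmu : Continuous mu)
    (hnu : Continuous nu) : IsClosed {c | MPOCAdmissible g G H x (lam c) (mu c) (nu c)} := by
  simp only [MPOCAdmissible, Set.ofPred_and, Set.ofPred_forall]
  repeat' first
    | apply IsClosed.inter | refine isClosed_iInter fun _ => ?_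
    | apply isClosed_le | apply isClosed_eq
  all_goals fun_prop

/-- MPOC-MFCQ at `x` with arbitrary vectors `a`, `b`, `A`, `B` in place of the gradients at `x`. -/
def MPOCPosLinIndep {F : Type*} [AddCommGroup F] [Module ℝ F] (g : Fin m → (Fin n → ℝ) → ℝ)
    (G H : Fin q → (Fin n → ℝ) → ℝ) (x : Fin n → ℝ) (a : Fin m → F) (b : Fin p → F)
    (A B : Fin q → F) : Prop :=
  ∀ (lam : Fin m → ℝ) (rho : Fin p → ℝ) (mu nu : Fin q → ℝ), MPOCAdmissible g G H x lam mu nu →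
    (∑ i, lam i • a i) + (∑ j, rho j • b j) + (∑ l, mu l • A l) + (∑ l, nu l • B l) = 0 →
    lam = 0 ∧ rho = 0 ∧ mu = 0 ∧ nu = 0

theorem MPOC_MFCQ.posLinIndep {g : Fin m → (Fin n → ℝ) → ℝ} {h : Fin p → (Fin n → ℝ) → ℝ}
    {G H : Fin q → (Fin n → ℝ) → ℝ} {x : Fin n → ℝ} (hmfcq : MPOC_MFCQ g h G H x) :
    MPOCPosLinIndep g G H x (fun i => fderiv ℝ (g i) x) (fun j => fderiv ℝ (h j) x)
      (fun l => fderiv ℝ (G l) x) (fun l => fderiv ℝ (H l) x) := by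
  rintro lam rho mu nu ⟨h₁, h₂, h₃, h₄, h₅, h₆⟩ hsum
  obtain ⟨hlam, hrho, hmu, hnu⟩ := hmfcq lam rho mu nu h₁ h₂ h₃ h₄ h₅ h₆ hsum
  exact ⟨funext hlam, funext hrho, funext hmu, funext hnu⟩

theorem MPOCPosLinIndep.eventually {X F : Type*} [TopologicalSpace X] [NormedAddCommGroup F]
    [NormedSpace ℝ F] {g : Fin m → (Fin n → ℝ) → ℝ} {G H : Fin q → (Fin n → ℝ) → ℝ}
    {xb : Fin n → ℝ} {a₀ : Fin m → F} {b₀ : Fin p → F} {A₀ B₀ : Fin q → F}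
    (hind : MPOCPosLinIndep g G H xb a₀ b₀ A₀ B₀) {x₀ : X} {a : X → Fin m → F}
    {b : X → Fin p → F} {A B : X → Fin q → F} (ha : ∀ i, Tendsto (a · i) (𝓝 x₀) (𝓝 (a₀ i)))
    (hb : ∀ j, Tendsto (b · j) (𝓝 x₀) (𝓝 (b₀ j))) (hA : ∀ l, Tendsto (A · l) (𝓝 x₀) (𝓝 (A₀ l)))
    (hB : ∀ l, Tendsto (B · l) (𝓝 x₀) (𝓝 (B₀ l))) :
    ∀ᶠ x in 𝓝 x₀, MPOCPosLinIndep g G H xb (a x) (b x) (A x) (B x) := by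
  let lamOf (c : Fin m ⊕ Fin p ⊕ Fin q ⊕ Fin q → ℝ) : Fin m → ℝ := fun i => c (.inl i)
  let rhoOf (c : Fin m ⊕ Fin p ⊕ Fin q ⊕ Fin q → ℝ) : Fin p → ℝ := fun j => c (.inr (.inl j))
  let muOf (c : Fin m ⊕ Fin p ⊕ Fin q ⊕ Fin q → ℝ) : Fin q → ℝ := fun l => c (.inr (.inr (.inl l)))
  let nuOf (c : Fin m ⊕ Fin p ⊕ Fin q ⊕ Fin q → ℝ) : Fin q → ℝ := fun l => c (.inr (.inr (.inr l)))
  have key := eventually_forall_sum_smul_eq_zero_imp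
    (C := {c | MPOCAdmissible g G H xb (lamOf c) (muOf c) (nuOf c)})
    (isClosed_setOf_MPOCAdmissible g G H xb (by fun_prop) (by fun_prop) (by fun_prop))
    (fun r hr c hc => hc.smul hr.le)
    (v := fun x => Sum.elim (a x) (Sum.elim (b x) (Sum.elim (A x) (B x))))
    (x₀ := x₀) (v₀ := Sum.elim a₀ (Sum.elim b₀ (Sum.elim A₀ B₀)))
    (by rintro (i | j | l | l) <;> simp [ha, hb, hA, hB]) ?_
  · filter_upwards [key] with x hx lam rho mu nu hadm hsum
    have hc := hx (Sum.elim lam (Sum.elim rho (Sum.elim mu nu))) hadm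
      (by simpa [Fintype.sum_sum_type, add_assoc] using hsum)
    exact ⟨funext fun i => congrFun hc (.inl i), funext fun j => congrFun hc (.inr (.inl j)),
      funext fun l => congrFun hc (.inr (.inr (.inl l))),
      funext fun l => congrFun hc (.inr (.inr (.inr l)))⟩
  · intro c hc hsum
    obtain ⟨hlam, hrho, hmu, hnu⟩ := hind _ (rhoOf c) _ _ hc
      (by simpa [Fintype.sum_sum_type, add_assoc] using hsum)
    funext k
    rcases k with i | j | l | l
    exacts [congrFun hlam i, congrFun hrho j, congrFun hmu l, congrFun hnu l]

def offsetKS_MFCQ (g : Fin m → (Fin n → ℝ) → ℝ) (h : Fin p → (Fin n → ℝ) → ℝ)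
    (G H : Fin q → (Fin n → ℝ) → ℝ) (t : ℝ) (x : Fin n → ℝ) : Prop :=
  ∀ (lam : Fin m → ℝ) (rho : Fin p → ℝ) (xi : Fin q → ℝ),
    (∀ i, 0 ≤ lam i) → (∀ i, g i x ≠ 0 → lam i = 0) →
    (∀ l, 0 ≤ xi l) → (∀ l, phiKSt t (G l x, H l x) ≠ 0 → xi l = 0) →
    ((∑ i, lam i • fderiv ℝ (g i) x) + (∑ j, rho j • fderiv ℝ (h j) x)
      + (∑ l, xi l • (H l x • fderiv ℝ (G l) x + G l x • fderiv ℝ (H l) x)) = 0) →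
    (∀ i, lam i = 0) ∧ (∀ j, rho j = 0) ∧ (∀ l, xi l = 0)

theorem offsetKS_MFCQ_of_posLinIndep {g : Fin m → (Fin n → ℝ) → ℝ}
    {h : Fin p → (Fin n → ℝ) → ℝ} {G H : Fin q → (Fin n → ℝ) → ℝ} {xb x : Fin n → ℝ} {t : ℝ}
    (hxb : xb ∈ feasMPOC g h G H) (ht : 0 < t)
    (hg_neg : ∀ i, g i xb < 0 → g i x < 0) (hG_neg : ∀ l, G l xb < 0 → G l x < 0)
    (hH_neg : ∀ l, H l xb < 0 → H l x < 0)
    (hind : MPOCPosLinIndep g G H xb (fun i => fderiv ℝ (g i) x) (fun j => fderiv ℝ (h j) x)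
      (fun l => transportedGrad (G l) (H l) xb x) (fun l => transportedGrad (H l) (G l) xb x)) :
    offsetKS_MFCQ g h G H t x := by
  intro lam rho xi hlam hlam_supp hxi hxi_supp hsum
  obtain ⟨hg_feas, -, hGH_feas⟩ := hxb
  have hact : ∀ l, xi l ≠ 0 → (0 < G l x ∧ 0 < H l x) ∧
      ((G l xb = 0 ∧ 0 ≤ H l xb) ∨ (H l xb = 0 ∧ 0 ≤ G l xb)) := fun l hl =>
    pattern_of_phiKSt_eq_zero ht (not_imp_comm.1 (hxi_supp l) hl) (hG_neg l) (hH_neg l)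
      (hGH_feas l)
  set mu : Fin q → ℝ := fun l => transportedMult (G l) (H l) xb x (xi l)
  set nu : Fin q → ℝ := fun l => transportedMult (H l) (G l) xb x (xi l)
  have hadm : MPOCAdmissible g G H xb lam mu nu :=
    ⟨hlam, fun i hi => hlam_supp i (hg_neg i ((hg_feas i).lt_of_ne hi)).ne,
      fun l => transportedMult_nonneg (hxi l) fun hl => (hact l hl).1.2, fun l hl => if_neg hl,
      fun l => transportedMult_nonneg (hxi l) fun hl => (hact l hl).1.1, fun l hl => if_neg hl⟩
  have htransport : (∑ l, mu l • transportedGrad (G l) (H l) xb x)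
      + (∑ l, nu l • transportedGrad (H l) (G l) xb x)
      = ∑ l, xi l • (H l x • fderiv ℝ (G l) x + G l x • fderiv ℝ (H l) x) := by
    rw [← Finset.sum_add_distrib]
    refine Finset.sum_congr rfl fun l _ => ?_
    rcases eq_or_ne (xi l) 0 with h0 | hne
    · simp [mu, nu, transportedMult, h0]
    · obtain ⟨⟨hGx, hHx⟩, hpattern⟩ := hact l hne
      exact transportedMult_smul_add (xi l) hGx.ne' hHx.ne' hpattern
  obtain ⟨rfl, rfl, hmu, hnu⟩ := hind lam rho mu nu hadm (by rw [add_assoc, htransport]; exact hsum)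
  refine ⟨fun _ => rfl, fun _ => rfl, fun l => ?_⟩
  by_contra hne
  obtain ⟨⟨hGx, hHx⟩, hpattern⟩ := hact l hne
  exact hne (eq_zero_of_transportedMult_eq_zero hGx.ne' hHx.ne' hpattern (congrFun hmu l)
    (congrFun hnu l))

theorem regularity_offsetKS_general {n m p q : ℕ}
    (g : Fin m → (Fin n → ℝ) → ℝ) (h : Fin p → (Fin n → ℝ) → ℝ)
    (G H : Fin q → (Fin n → ℝ) → ℝ)
    (hg : ∀ i, ContDiff ℝ 1 (g i)) (hh : ∀ j, ContDiff ℝ 1 (h j))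
    (hG : ∀ l, ContDiff ℝ 1 (G l)) (hH : ∀ l, ContDiff ℝ 1 (H l))
    (xb : Fin n → ℝ) (hxb : xb ∈ feasMPOC g h G H) (hmfcq : MPOC_MFCQ g h G H xb) :
    ∃ U ∈ nhds xb, ∀ t : ℝ, 0 < t → ∀ x ∈ relFeas g h G H phiKSt t ∩ U,
      ∀ (lam : Fin m → ℝ) (rho : Fin p → ℝ) (xi : Fin q → ℝ),
        (∀ i, 0 ≤ lam i) → (∀ i, g i x ≠ 0 → lam i = 0) →
        (∀ l, 0 ≤ xi l) → (∀ l, phiKSt t (G l x, H l x) ≠ 0 → xi l = 0) →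
        ((∑ i, lam i • fderiv ℝ (g i) x) + (∑ j, rho j • fderiv ℝ (h j) x)
          + (∑ l, xi l • (H l x • fderiv ℝ (G l) x + G l x • fderiv ℝ (H l) x)) = 0) →
        (∀ i, lam i = 0) ∧ (∀ j, rho j = 0) ∧ (∀ l, xi l = 0) := by
  have hfderiv {u : (Fin n → ℝ) → ℝ} (hu : ContDiff ℝ 1 u) :
      Tendsto (fderiv ℝ u) (𝓝 xb) (𝓝 (fderiv ℝ u xb)) :=
    (hu.continuous_fderiv one_ne_zero).tendsto xb
  have hind := hmfcq.posLinIndep.eventually (fun i => hfderiv (hg i)) (fun j => hfderiv (hh j))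
    (fun l => tendsto_transportedGrad (hG l) (hH l) xb)
    (fun l => tendsto_transportedGrad (hH l) (hG l) xb)
  have hneg {k : ℕ} {u : Fin k → (Fin n → ℝ) → ℝ} (hu : ∀ i, ContDiff ℝ 1 (u i)) :
      ∀ᶠ x in 𝓝 xb, ∀ i, u i xb < 0 → u i x < 0 :=
    eventually_all.2 fun i => (hu i).continuous.continuousAt.eventually_imp_lt 0
  refine ⟨_, hind.and ((hneg hg).and ((hneg hG).and (hneg hH))),
    fun t ht x ⟨_, hindx, hgx, hGx, hHx⟩ => offsetKS_MFCQ_of_posLinIndep hxb ht hgx hGx hHx hindx⟩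

/-- Under MPOC-MFCQ, standard MFCQ holds for the relaxed problems P(φ_KS^t) at all
feasible points in a neighborhood of the reference point, uniformly in `t > 0`. -/
theorem regularity_offsetKS {n m p q : ℕ} (f : (Fin n → ℝ) → ℝ)
    (g : Fin m → (Fin n → ℝ) → ℝ) (h : Fin p → (Fin n → ℝ) → ℝ)
    (G H : Fin q → (Fin n → ℝ) → ℝ)
    (hf : ContDiff ℝ 1 f) (hg : ∀ i, ContDiff ℝ 1 (g i)) (hh : ∀ j, ContDiff ℝ 1 (h j))
    (hG : ∀ l, ContDiff ℝ 1 (G l)) (hH : ∀ l, ContDiff ℝ 1 (H l))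
    (xb : Fin n → ℝ) (hxb : xb ∈ feasMPOC g h G H) (hmfcq : MPOC_MFCQ g h G H xb) :
    ∃ U ∈ nhds xb, ∀ t : ℝ, 0 < t → ∀ x ∈ relFeas g h G H phiKSt t ∩ U,
      ∀ (lam : Fin m → ℝ) (rho : Fin p → ℝ) (xi : Fin q → ℝ),
        (∀ i, 0 ≤ lam i) → (∀ i, g i x ≠ 0 → lam i = 0) →
        (∀ l, 0 ≤ xi l) → (∀ l, phiKSt t (G l x, H l x) ≠ 0 → xi l = 0) →
        ((∑ i, lam i • fderiv ℝ (g i) x) + (∑ j, rho j • fderiv ℝ (h j) x)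
          + (∑ l, xi l • (H l x • fderiv ℝ (G l) x + G l x • fderiv ℝ (H l) x)) = 0) →
        (∀ i, lam i = 0) ∧ (∀ j, rho j = 0) ∧ (∀ l, xi l = 0) :=
  regularity_offsetKS_general g h G H hg hh hG hH xb hxb hmfcq
end
end
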